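/- arXiv:2207.06725 — 3 statements merged into one kernel-verified Lean document; each statement's English description precedes it below -/
import Mathlib

section
/- Let A be an invertible m×m real matrix (IsUnit A.det), let b ∈ ℝ^m, and let d₁,…,d_m ∈ ℝ^d. For each n ∈ ℝ^d consider the (m+1)×(m+1) block matrix M(n) = fromBlocks A b r(n) 0, where r(n) is the row vector with entries r(n)_j = ⟪d_j, n⟫. Then for every n, det(M(n)) = −det(A) · ⟪ Σ_{j=1}^{m} (A⁻¹ *ᵥ b)_j • d_j , n ⟫. In particular the optimal direction v representing det(M(n)) = ⟪v,n⟫ is v = −det(A) Σ_j ψ̄_j d_j, where ψ̄ = A⁻¹ b are the values of the cardinal functions of the interior-node interpolation at the boundary node. -/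
open scoped Matrix RealInnerProductSpace

/-! The Schur complement of `A` in the bordered matrix is the `1 × 1` matrix `-(r ⬝ᵥ A⁻¹ b)`, and
`r ⬝ᵥ ψ = ⟪∑ j, ψ j • d j, n⟫` by linearity of the inner product in its first argument. -/

namespace Matrix

theorem det_fromBlocks_replicateCol_replicateRow_zero {R m ι : Type*} [CommRing R] [Fintype m]
    [DecidableEq m] [DecidableEq ι] [Unique ι] (A : Matrix m m R) [Invertible A] (b r : m → R) :
    (fromBlocks A (replicateCol ι b) (replicateRow ι r) 0).det = -A.det * (r ⬝ᵥ (A⁻¹ *ᵥ b)) := by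
  rw [det_fromBlocks₁₁, invOf_eq_nonsing_inv, Matrix.mul_assoc, ← replicateCol_mulVec,
    replicateRow_mul_replicateCol, zero_sub, det_unique (n := ι), neg_apply, of_apply, mul_neg,
    neg_mul]

end Matrix

theorem dotProduct_inner_eq_inner_sum {E : Type*} [NormedAddCommGroup E] [InnerProductSpace ℝ E]
    {m : Type*} [Fintype m] (v : m → E) (c : m → ℝ) (x : E) :
    (fun j => ⟪v j, x⟫) ⬝ᵥ c = ⟪∑ j, c j • v j, x⟫ := by
  simp [dotProduct, sum_inner, inner_smul_left, mul_comm]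

/-- Explicit formula for the optimal direction: for the bordered matrix `M n`
whose last row has entries `⟪d j, n⟫`, one has
`det (M n) = - det A * ⟪∑ j, (A⁻¹ b) j • d j, n⟫`. -/
theorem stmt_4 (d m : ℕ) (A : Matrix (Fin m) (Fin m) ℝ) (hA : IsUnit A.det)
    (b : Fin m → ℝ) (dv : Fin m → EuclideanSpace ℝ (Fin d)) :
    ∀ n : EuclideanSpace ℝ (Fin d),
      (Matrix.fromBlocks A (Matrix.of fun i (_ : Fin 1) => b i)
          (Matrix.of fun (_ : Fin 1) j => ⟪dv j, n⟫)
          (0 : Matrix (Fin 1) (Fin 1) ℝ)).det =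
        -A.det * ⟪∑ j : Fin m, (A⁻¹ *ᵥ b) j • dv j, n⟫ := by
  intro n
  have : Invertible A := A.invertibleOfIsUnitDet hA
  rw [← dotProduct_inner_eq_inner_sum]
  exact Matrix.det_fromBlocks_replicateCol_replicateRow_zero A b _
end

section
/- Let Φ : ℝ → ℝ have derivative 0 at 0 (HasDerivAt Φ 0 0), and let c ∈ ℝ^d. Then the radial function x ↦ Φ(‖x − c‖) is Fréchet differentiable at its center c with derivative equal to the zero linear map. -/
open Asymptotics Filter Topology

theorem hasFDerivAt_comp_norm_sub_of_hasDerivAt_zero {E F : Type*}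
    [NormedAddCommGroup E] [NormedSpace ℝ E] [NormedAddCommGroup F] [NormedSpace ℝ F]
    {Φ : ℝ → F} (hΦ : HasDerivAt Φ 0 0) (c : E) :
    HasFDerivAt (fun x => Φ ‖x - c‖) (0 : E →L[ℝ] F) c := by
  rw [hasFDerivAt_iff_isLittleO_nhds_zero]
  have hΦo : (fun t : ℝ => Φ t - Φ 0) =o[𝓝 0] fun t => t := by
    simpa using hasDerivAt_iff_isLittleO_nhds_zero.mp hΦ
  have hnorm : (fun h : E => ‖h‖) =O[𝓝 0] fun h => h := isBigO_norm_left.2 (isBigO_refl _ _)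
  simpa [Function.comp_def] using (hΦo.comp_tendsto tendsto_norm_zero).trans_isBigO hnorm

/-- If `Φ'(0) = 0` then the radial function `x ↦ Φ ‖x - c‖` is Fréchet
differentiable at its center `c` with derivative the zero linear map. -/
theorem stmt_7 (d : ℕ) (Φ : ℝ → ℝ) (hΦ : HasDerivAt Φ 0 0)
    (c : EuclideanSpace ℝ (Fin d)) :
    HasFDerivAt (fun x : EuclideanSpace ℝ (Fin d) => Φ ‖x - c‖)
      (0 : EuclideanSpace ℝ (Fin d) →L[ℝ] ℝ) c :=
  hasFDerivAt_comp_norm_sub_of_hasDerivAt_zero hΦ c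
end

section
/- Let K ⊆ ℝ^d be a set, let x₁,…,x_m ∈ K be nodes with the first m_I internal and the last m_B = m − m_I boundary, let n_k ∈ ℝ^d with ‖n_k‖ = 1 be unit normals at the boundary nodes, and let ψ₁,…,ψ_m : ℝ^d → ℝ be cardinal functions. For any function w differentiable at each boundary node define T w (y) = Σ_{i=1}^{m_I} w(x_i)·ψ_i(y) + Σ_{k=m_I+1}^{m} (fderiv ℝ w x_k)(n_k)·ψ_k(y). Let u, u* : ℝ^d → ℝ be differentiable at each boundary node and suppose: T u* (y) = u*(y) for all y ∈ K (the approximant u* is reproduced by the interpolation); |u(z) − u*(z)| ≤ E and ‖fderiv ℝ u z − fderiv ℝ u* z‖ ≤ C for all z ∈ K; Σ_{i=1}^{m_I} |ψ_i(z)| ≤ Λ_I and Σ_{k=m_I+1}^{m} |ψ_k(z)| ≤ Λ_B for all z ∈ K. Then |u(y) − T u (y)| ≤ (1 + Λ_I)·E + Λ_B·C for every y ∈ K. -/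
/-! Write `u - T u = (u - u*) + (T u* - T u)`. The first term is at most `E`. The second
compares the two applications of `T` term by term: it is a combination of the data differences
`u*(xᵢ) - u(xᵢ)` and `(Du*(x_k) - Du(x_k)) n_k`, bounded by `E` and `C`, weighted by the
cardinal functions, whose absolute sums are the Lebesgue constants. -/

open Finset

/-- The RBF interpolation operator with Neumann data: values of `w` at the
internal nodes (indices `< m_I`) and normal derivatives of `w` at the boundary
nodes (indices `≥ m_I`), combined through the cardinal functions `ψ`. -/
noncomputable def interpOp (d m mI : ℕ) (x : Fin m → EuclideanSpace ℝ (Fin d))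
    (nrm : Fin m → EuclideanSpace ℝ (Fin d))
    (ψ : Fin m → EuclideanSpace ℝ (Fin d) → ℝ)
    (w : EuclideanSpace ℝ (Fin d) → ℝ) (y : EuclideanSpace ℝ (Fin d)) : ℝ :=
  (∑ i ∈ univ.filter (fun i : Fin m => (i : ℕ) < mI), w (x i) * ψ i y) +
    ∑ k ∈ univ.filter (fun k : Fin m => mI ≤ (k : ℕ)),
      (fderiv ℝ w (x k)) (nrm k) * ψ k y

theorem Finset.abs_sum_mul_le_of_abs_le {ι : Type*} (s : Finset ι) (a b : ι → ℝ) {M : ℝ}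
    (ha : ∀ i ∈ s, |a i| ≤ M) : |∑ i ∈ s, a i * b i| ≤ M * ∑ i ∈ s, |b i| := by
  calc |∑ i ∈ s, a i * b i| ≤ ∑ i ∈ s, |a i| * |b i| := by
        simpa only [abs_mul] using abs_sum_le_sum_abs (fun i => a i * b i) s
    _ ≤ ∑ i ∈ s, M * |b i| :=
        sum_le_sum fun i hi => mul_le_mul_of_nonneg_right (ha i hi) (abs_nonneg _)
    _ = M * ∑ i ∈ s, |b i| := (mul_sum s _ M).symm

section interpOp

variable {d m mI : ℕ} {x nrm : Fin m → EuclideanSpace ℝ (Fin d)}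
  {ψ : Fin m → EuclideanSpace ℝ (Fin d) → ℝ}

theorem interpOp_sub_interpOp (v w : EuclideanSpace ℝ (Fin d) → ℝ)
    (y : EuclideanSpace ℝ (Fin d)) :
    interpOp d m mI x nrm ψ v y - interpOp d m mI x nrm ψ w y =
      (∑ i ∈ univ.filter (fun i : Fin m => (i : ℕ) < mI), (v (x i) - w (x i)) * ψ i y) +
        ∑ k ∈ univ.filter (fun k : Fin m => mI ≤ (k : ℕ)),
          (fderiv ℝ v (x k) - fderiv ℝ w (x k)) (nrm k) * ψ k y := by
  simp only [interpOp, FunLike.coe_sub, Pi.sub_apply, sub_mul, sum_sub_distrib]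
  ring

theorem abs_interpOp_sub_interpOp_le {v w : EuclideanSpace ℝ (Fin d) → ℝ} {E C : ℝ}
    (hnrm : ∀ k : Fin m, mI ≤ (k : ℕ) → ‖nrm k‖ = 1)
    (hE : ∀ i : Fin m, (i : ℕ) < mI → |v (x i) - w (x i)| ≤ E)
    (hC : ∀ k : Fin m, mI ≤ (k : ℕ) → ‖fderiv ℝ v (x k) - fderiv ℝ w (x k)‖ ≤ C)
    (y : EuclideanSpace ℝ (Fin d)) :
    |interpOp d m mI x nrm ψ v y - interpOp d m mI x nrm ψ w y| ≤
      E * ∑ i ∈ univ.filter (fun i : Fin m => (i : ℕ) < mI), |ψ i y| +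
        C * ∑ k ∈ univ.filter (fun k : Fin m => mI ≤ (k : ℕ)), |ψ k y| := by
  have hnormal : ∀ k ∈ univ.filter (fun k : Fin m => mI ≤ (k : ℕ)),
      |(fderiv ℝ v (x k) - fderiv ℝ w (x k)) (nrm k)| ≤ C := fun k hk => by
    have hk := (mem_filter.mp hk).2
    calc |(fderiv ℝ v (x k) - fderiv ℝ w (x k)) (nrm k)|
        ≤ ‖fderiv ℝ v (x k) - fderiv ℝ w (x k)‖ * ‖nrm k‖ := by
          simpa only [Real.norm_eq_abs] using
            (fderiv ℝ v (x k) - fderiv ℝ w (x k)).le_opNorm (nrm k)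
      _ ≤ C := by rw [hnrm k hk, mul_one]; exact hC k hk
  rw [interpOp_sub_interpOp]
  exact (abs_add_le _ _).trans <| add_le_add
    (abs_sum_mul_le_of_abs_le _ _ _ fun i hi => hE i (mem_filter.mp hi).2)
    (abs_sum_mul_le_of_abs_le _ _ _ hnormal)

end interpOp

theorem stmt_16_general (d m mI : ℕ)
    (K : Set (EuclideanSpace ℝ (Fin d)))
    (x : Fin m → EuclideanSpace ℝ (Fin d)) (hx : ∀ i, x i ∈ K)
    (nrm : Fin m → EuclideanSpace ℝ (Fin d))
    (hnrm : ∀ k : Fin m, mI ≤ (k : ℕ) → ‖nrm k‖ = 1)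
    (ψ : Fin m → EuclideanSpace ℝ (Fin d) → ℝ)
    (u ustar : EuclideanSpace ℝ (Fin d) → ℝ)
    (hrep : ∀ y ∈ K, interpOp d m mI x nrm ψ ustar y = ustar y)
    (E C ΛI ΛB : ℝ)
    (hE : ∀ z ∈ K, |u z - ustar z| ≤ E)
    (hC : ∀ z ∈ K, ‖fderiv ℝ u z - fderiv ℝ ustar z‖ ≤ C)
    (hΛI : ∀ z ∈ K, ∑ i ∈ univ.filter (fun i : Fin m => (i : ℕ) < mI), |ψ i z| ≤ ΛI)
    (hΛB : ∀ z ∈ K, ∑ k ∈ univ.filter (fun k : Fin m => mI ≤ (k : ℕ)), |ψ k z| ≤ ΛB) :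
    ∀ y ∈ K, |u y - interpOp d m mI x nrm ψ u y| ≤ (1 + ΛI) * E + ΛB * C := by
  intro y hy
  have hE₀ : 0 ≤ E := (abs_nonneg _).trans (hE y hy)
  have hC₀ : 0 ≤ C := (norm_nonneg _).trans (hC y hy)
  have hinterp : |ustar y - interpOp d m mI x nrm ψ u y| ≤ ΛI * E + ΛB * C := by
    rw [← hrep y hy]
    refine (abs_interpOp_sub_interpOp_le hnrm
      (fun i _ => abs_sub_comm (u (x i)) _ ▸ hE (x i) (hx i))
      (fun k _ => norm_sub_rev (fderiv ℝ u (x k)) _ ▸ hC (x k) (hx k)) y).trans ?_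
    linarith [mul_le_mul_of_nonneg_left (hΛI y hy) hE₀,
      mul_le_mul_of_nonneg_left (hΛB y hy) hC₀]
  calc |u y - interpOp d m mI x nrm ψ u y|
      ≤ |u y - ustar y| + |ustar y - interpOp d m mI x nrm ψ u y| := abs_sub_le _ _ _
    _ ≤ E + (ΛI * E + ΛB * C) := add_le_add (hE y hy) hinterp
    _ = (1 + ΛI) * E + ΛB * C := by ring

/-- Interpolation error estimate via the Lebesgue constants: if the best
approximation `u*` is reproduced by the interpolation operator `T`, then
`|u - T u| ≤ (1 + Λ_I) ‖u - u*‖_∞ + Λ_B C_∞(u - u*)` on `K`. -/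
theorem stmt_16 (d m mI : ℕ) (hmI : mI ≤ m)
    (K : Set (EuclideanSpace ℝ (Fin d)))
    (x : Fin m → EuclideanSpace ℝ (Fin d)) (hx : ∀ i, x i ∈ K)
    (nrm : Fin m → EuclideanSpace ℝ (Fin d))
    (hnrm : ∀ k : Fin m, mI ≤ (k : ℕ) → ‖nrm k‖ = 1)
    (ψ : Fin m → EuclideanSpace ℝ (Fin d) → ℝ)
    (u ustar : EuclideanSpace ℝ (Fin d) → ℝ)
    (hdiffu : ∀ k : Fin m, mI ≤ (k : ℕ) → DifferentiableAt ℝ u (x k))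
    (hdiffustar : ∀ k : Fin m, mI ≤ (k : ℕ) → DifferentiableAt ℝ ustar (x k))
    (hrep : ∀ y ∈ K, interpOp d m mI x nrm ψ ustar y = ustar y)
    (E C ΛI ΛB : ℝ)
    (hE : ∀ z ∈ K, |u z - ustar z| ≤ E)
    (hC : ∀ z ∈ K, ‖fderiv ℝ u z - fderiv ℝ ustar z‖ ≤ C)
    (hΛI : ∀ z ∈ K, ∑ i ∈ univ.filter (fun i : Fin m => (i : ℕ) < mI), |ψ i z| ≤ ΛI)
    (hΛB : ∀ z ∈ K, ∑ k ∈ univ.filter (fun k : Fin m => mI ≤ (k : ℕ)), |ψ k z| ≤ ΛB) :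
    ∀ y ∈ K, |u y - interpOp d m mI x nrm ψ u y| ≤ (1 + ΛI) * E + ΛB * C :=
  stmt_16_general d m mI K x hx nrm hnrm ψ u ustar hrep E C ΛI ΛB hE hC hΛI hΛB
end
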